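/- arXiv:1909.08123 — 5 statements merged into one kernel-verified Lean document; each statement's English description precedes it below -/
import Mathlib

section
/- Any maximal pairwise anticommuting subset of (𝔽₂)^{2n} has odd cardinality. -/
/-!
If a maximal anticommuting set `G` had even size, the sum `S` of its elements would anticommute
with every `Q ∈ G`: `ω(S, Q) = ω(Q, Q) + ∑_{P ≠ Q} ω(P, Q) = |G| - 1 = 1`. Since `ω(S, S) = 0`,
`S ∉ G`, so `G ∪ {S}` would be a strictly larger anticommuting set.
-/

/-- The phase space `(𝔽₂)^{2n}`, modeled as pairs of vectors in `𝔽₂ⁿ`. -/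
abbrev V (n : ℕ) := (Fin n → ZMod 2) × (Fin n → ZMod 2)

/-- The standard symplectic bilinear form `ω((a,b),(c,d)) = a·d + b·c`. -/
def sympl {n : ℕ} (P Q : V n) : ZMod 2 :=
  ∑ i, (P.1 i * Q.2 i + P.2 i * Q.1 i)

/-- A finite set is (pairwise) anticommuting if `ω(P,Q) = 1` for all distinct `P, Q`. -/
def AC {n : ℕ} (G : Finset (V n)) : Prop :=
  ∀ P ∈ G, ∀ Q ∈ G, P ≠ Q → sympl P Q = 1

/-- A maximal pairwise anticommuting set: no strictly larger set is anticommuting. -/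
def MaxAC {n : ℕ} (G : Finset (V n)) : Prop :=
  AC G ∧ ∀ H : Finset (V n), G ⊆ H → AC H → H = G

open Finset

variable {n : ℕ}

lemma sympl_self (P : V n) : sympl P P = 0 :=
  sum_eq_zero fun i _ => by rw [mul_comm]; exact CharTwo.add_self_eq_zero _

lemma sympl_comm (P Q : V n) : sympl P Q = sympl Q P :=
  sum_congr rfl fun i _ => by ring

lemma sympl_sum_left {ι : Type*} (s : Finset ι) (f : ι → V n) (Q : V n) :
    sympl (∑ j ∈ s, f j) Q = ∑ j ∈ s, sympl (f j) Q := by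
  simp only [sympl, Prod.fst_sum, Prod.snd_sum, Finset.sum_apply, sum_mul,
    ← sum_add_distrib]
  exact sum_comm

lemma AC.insert {G : Finset (V n)} (hG : AC G) {S : V n} (hS : ∀ Q ∈ G, sympl S Q = 1) :
    AC (insert S G) := by
  intro P hP Q hQ hPQ
  rcases mem_insert.1 hP with rfl | hPG <;> rcases mem_insert.1 hQ with rfl | hQG
  · exact absurd rfl hPQ
  · exact hS Q hQG
  · rw [sympl_comm]; exact hS P hPG
  · exact hG P hPG Q hQG hPQ

lemma AC.sympl_sum_eq_one {G : Finset (V n)} (hG : AC G) (heven : Even #G) {Q : V n}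
    (hQ : Q ∈ G) : sympl (∑ P ∈ G, P) Q = 1 := by
  have hrest : ∀ P ∈ G.erase Q, sympl P Q = 1 := fun P hP =>
    hG P (mem_of_mem_erase hP) Q hQ (ne_of_mem_erase hP)
  rw [sympl_sum_left, ← add_sum_erase _ _ hQ, sympl_self, zero_add, sum_congr rfl hrest,
    sum_const, card_erase_of_mem hQ, nsmul_one, Nat.cast_sub (card_pos.2 ⟨Q, hQ⟩),
    heven.natCast_zmod_two]
  decide

theorem stmt_6 {n : ℕ} (G : Finset (V n)) (hG : MaxAC G) : Odd G.card := by
  by_contra hodd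
  have heven : Even #G := Nat.not_odd_iff_even.1 hodd
  set S := ∑ P ∈ G, P
  have hSG : ∀ Q ∈ G, sympl S Q = 1 := fun Q hQ => hG.1.sympl_sum_eq_one heven hQ
  have hS : S ∉ G := fun hS => by simpa [sympl_self] using hSG S hS
  exact hS (insert_eq_self.1 (hG.2 _ (subset_insert S G) (hG.1.insert hSG)))
end

section
/- Let G ⊆ (𝔽₂)^{2n} be a pairwise anticommuting set of size k ≥ 2 whose sum is 0. Then G spans a subgroup of order 2^{k−1}. -/
open Finset

section ZModSpan

variable {M : Type*} [AddCommGroup M]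

lemma AddSubgroup.toZModSubmodule_closure (p : ℕ) [Module (ZMod p) M] (s : Set M) :
    AddSubgroup.toZModSubmodule p (AddSubgroup.closure s) = Submodule.span (ZMod p) s :=
  (Submodule.span_le.mpr AddSubgroup.subset_closure).antisymm'
    ((Submodule.span (ZMod p) s).toAddSubgroup.closure_le.mpr Submodule.subset_span)

lemma natCard_addSubgroupClosure_of_linearIndepOn (p : ℕ) [Fact p.Prime] [Module (ZMod p) M]
    {s : Finset M} (hs : LinearIndepOn (ZMod p) id (s : Set M)) :
    Nat.card (AddSubgroup.closure (s : Set M)) = p ^ #s := by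
  have hcard : Nat.card (AddSubgroup.closure (s : Set M)) =
      Nat.card (Submodule.span (ZMod p) (s : Set M)) := by
    rw [← AddSubgroup.toZModSubmodule_closure]
    rfl
  rw [hcard, Module.natCard_eq_pow_finrank (K := ZMod p), finrank_span_finset_eq_card hs,
    Nat.card_zmod]

lemma linearIndepOn_zmod_two_of_forall_sum_eq_zero [Module (ZMod 2) M] {s : Finset M}
    (hs : ∀ t ⊆ s, ∑ x ∈ t, x = 0 → t = ∅) : LinearIndepOn (ZMod 2) id (s : Set M) := by
  rw [linearIndepOn_finset_iff]
  intro f hf i hi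
  by_contra hfi
  set t := s.filter (f · ≠ 0)
  have hsum : ∑ x ∈ t, x = 0 := by
    refine (sum_filter _ _).trans (Eq.trans (sum_congr rfl fun x _ => ?_) hf)
    rcases (by decide : ∀ a : ZMod 2, a = 0 ∨ a = 1) (f x) with h | h <;> simp [h]
  have hit : i ∈ t := mem_filter.mpr ⟨hi, hfi⟩
  simp [hs t (filter_subset _ _) hsum] at hit

end ZModSpan

section Symplectic

variable {n : ℕ}

lemma sympl_sum_right (Q : V n) (S : Finset (V n)) :
    sympl Q (∑ P ∈ S, P) = ∑ P ∈ S, sympl Q P := by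
  simp only [sympl, Prod.fst_sum, Prod.snd_sum, Finset.sum_apply, mul_sum, sum_add_distrib]
  rw [sum_comm (s := univ), sum_comm (s := univ)]

lemma AC.sympl_sum_eq_card_erase {G S : Finset (V n)} (hG : AC G) (hS : S ⊆ G)
    {R : V n} (hR : R ∈ G) : sympl R (∑ P ∈ S, P) = #(S.erase R) := by
  rw [sympl_sum_right, ← sum_erase _ (sympl_self R),
    sum_congr rfl fun P hP => hG R hR P (hS (mem_of_mem_erase hP)) (ne_of_mem_erase hP).symm]
  simp

lemma AC.eq_empty_or_eq_of_sum_eq_zero {G S : Finset (V n)} (hG : AC G) (hS : S ⊆ G)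
    (hzero : ∑ P ∈ S, P = 0) : S = ∅ ∨ S = G := by
  by_contra! ⟨⟨Q, hQ⟩, hproper⟩
  obtain ⟨R, hRG, hRS⟩ := exists_of_ssubset (hS.ssubset_of_ne hproper)
  have hQ_even : Even (#S - 1) := by
    rw [← ZMod.natCast_eq_zero_iff_even, ← card_erase_of_mem hQ,
      ← hG.sympl_sum_eq_card_erase hS (hS hQ), hzero]
    simp [sympl]
  have hR_even : Even #S := by
    rw [← ZMod.natCast_eq_zero_iff_even, ← erase_eq_of_notMem hRS,
      ← hG.sympl_sum_eq_card_erase hS hRG, hzero]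
    simp [sympl]
  have hpos : 0 < #S := card_pos.mpr ⟨Q, hQ⟩
  rw [Nat.even_iff] at hQ_even hR_even
  omega

end Symplectic

theorem stmt_10_general {n : ℕ} (G : Finset (V n)) (hG : AC G)
    (hsum : ∑ x ∈ G, x = (0 : V n)) :
    Nat.card (AddSubgroup.closure (G : Set (V n))) = 2 ^ (G.card - 1) := by
  rcases G.eq_empty_or_nonempty with rfl | ⟨g₀, hg₀⟩
  · simp
  set E := G.erase g₀
  have hE : LinearIndepOn (ZMod 2) id (E : Set (V n)) := by
    refine linearIndepOn_zmod_two_of_forall_sum_eq_zero fun t htE ht => ?_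
    refine (hG.eq_empty_or_eq_of_sum_eq_zero (htE.trans (erase_subset _ _)) ht).resolve_right ?_
    intro htG
    exact notMem_erase g₀ G (htE (htG ▸ hg₀))
  have hg₀_mem : g₀ ∈ AddSubgroup.closure (E : Set (V n)) := by
    rw [eq_neg_of_add_eq_zero_left ((add_sum_erase G (fun x => x) hg₀).trans hsum)]
    exact neg_mem (sum_mem fun x hx => AddSubgroup.subset_closure hx)
  have hclosure : AddSubgroup.closure (G : Set (V n)) = AddSubgroup.closure (E : Set (V n)) := by
    refine le_antisymm ?_ (AddSubgroup.closure_mono (erase_subset _ _))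
    rw [← insert_erase hg₀, coe_insert, AddSubgroup.closure_le]
    exact Set.insert_subset hg₀_mem AddSubgroup.subset_closure
  rw [hclosure, natCard_addSubgroupClosure_of_linearIndepOn 2 hE, card_erase_of_mem hg₀]

theorem stmt_10 {n : ℕ} (G : Finset (V n)) (hG : AC G) (hcard : 2 ≤ G.card)
    (hsum : ∑ x ∈ G, x = (0 : V n)) :
    Nat.card (AddSubgroup.closure (G : Set (V n))) = 2 ^ (G.card - 1) :=
  stmt_10_general G hG hsum
end

section
/- Let S ⊆ (𝔽₂)^{2n} be a pairwise anticommuting set that is not maximal (its sum is nonzero). Then S can be extended to a pairwise anticommuting set of cardinality 2n+1. -/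
/-!
For `P` in an anticommuting set `S` and `U ⊆ S`, `ω(P, ∑ U) = |U| + [P ∈ U]`. Hence a nonempty
`U ⊆ S` with `∑ U = 0` must be all of `S`, so `∑ S ≠ 0` makes `S` linearly independent and
`|S| ≤ 2n`. While `|S| < 2n`, nondegeneracy of `ω` lets us prescribe `ω(P, Q) = 1` for all
`P ∈ S`, and the solutions form a coset of the nonzero space `(span S)ᗮ`; choosing `Q ≠ ∑ S`
keeps the sum nonzero. Once `|S| = 2n` is even, `∑ S` itself anticommutes with every element of
`S` and is the last vector to add.
-/

open Finset Module

def PairwiseAnticommuting {M : Type*} [AddCommGroup M] [Module (ZMod 2) M]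
    (B : LinearMap.BilinForm (ZMod 2) M) (S : Finset M) : Prop :=
  ∀ P ∈ S, ∀ Q ∈ S, P ≠ Q → B P Q = 1

section

variable {M : Type*} [AddCommGroup M] [Module (ZMod 2) M] {B : LinearMap.BilinForm (ZMod 2) M}
  {S : Finset M}

lemma notMem_of_forall_apply_eq_one (hB : B.IsAlt) {Q : M} (hQ : ∀ P ∈ S, B P Q = 1) : Q ∉ S :=
  fun hQS => zero_ne_one ((hB.self_eq_zero Q).symm.trans (hQ Q hQS))

namespace PairwiseAnticommuting

lemma apply_sum_of_subset [DecidableEq M] (hB : B.IsAlt) (hS : PairwiseAnticommuting B S)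
    {U : Finset M} (hU : U ⊆ S) {P : M} (hP : P ∈ S) :
    B P (∑ x ∈ U, x) = U.card + if P ∈ U then 1 else 0 := by
  have hterm : ∀ x ∈ U, B P x = 1 + if P = x then 1 else 0 := by
    intro x hx
    by_cases hPx : P = x
    · simp only [hPx, hB.self_eq_zero, if_true]
      decide
    · simp [hS P hP x (hU hx) hPx, hPx]
  rw [map_sum, sum_congr rfl hterm, sum_add_distrib, sum_ite_eq]
  simp

lemma eq_empty_of_sum_eq_zero (hB : B.IsAlt) (hS : PairwiseAnticommuting B S)
    (hsum : ∑ x ∈ S, x ≠ 0) {U : Finset M} (hU : U ⊆ S) (hU0 : ∑ x ∈ U, x = 0) : U = ∅ := by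
  classical
  by_contra hne
  obtain ⟨P, hPU⟩ := nonempty_of_ne_empty hne
  obtain ⟨P₀, hP₀S, hP₀U⟩ : ∃ P₀ ∈ S, P₀ ∉ U :=
    exists_of_ssubset (hU.ssubset_of_ne (by rintro rfl; exact hsum hU0))
  have hodd : (U.card : ZMod 2) + 1 = 0 := by
    simpa [hU0, hPU] using (hS.apply_sum_of_subset hB hU (hU hPU)).symm
  have heven : (U.card : ZMod 2) = 0 := by
    simpa [hU0, hP₀U] using (hS.apply_sum_of_subset hB hU hP₀S).symm
  simp [heven] at hodd

lemma linearIndepOn (hB : B.IsAlt) (hS : PairwiseAnticommuting B S) (hsum : ∑ x ∈ S, x ≠ 0) :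
    LinearIndepOn (ZMod 2) id (S : Set M) := by
  classical
  have hcases : ∀ c : ZMod 2, c = 0 ∨ c = 1 := by decide
  rw [linearIndepOn_finset_iff]
  intro f hf i hi
  have hsupp : ∑ x ∈ S with f x = 1, x = 0 := by
    rw [sum_filter]
    refine (sum_congr rfl fun x _ => ?_).trans hf
    rcases hcases (f x) with h | h <;> simp [h]
  have hempty := hS.eq_empty_of_sum_eq_zero hB hsum (filter_subset _ S) hsupp
  rcases hcases (f i) with h | h
  · exact h
  · simpa [hi, h] using congrArg (i ∈ ·) hempty

lemma card_le_finrank [FiniteDimensional (ZMod 2) M] (hB : B.IsAlt)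
    (hS : PairwiseAnticommuting B S) (hsum : ∑ x ∈ S, x ≠ 0) : S.card ≤ finrank (ZMod 2) M :=
  (hS.linearIndepOn hB hsum).linearIndependent.finset_card_le_finrank

lemma insert_of_forall [DecidableEq M] {R : M} (hB : B.IsAlt) (hS : PairwiseAnticommuting B S)
    (hR : ∀ P ∈ S, B P R = 1) :
    PairwiseAnticommuting B (insert R S) := by
  have hR' : ∀ P ∈ S, B R P = 1 := fun P hP => by
    rw [← LinearMap.IsAlt.neg hB P R, hR P hP]; decide
  intro P hP Q hQ hPQ
  rcases mem_insert.mp hP with rfl | hPS <;> rcases mem_insert.mp hQ with rfl | hQS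
  · exact absurd rfl hPQ
  · exact hR' Q hQS
  · exact hR P hPS
  · exact hS P hPS Q hQS hPQ

lemma exists_forall_apply_eq_one_ne [FiniteDimensional (ZMod 2) M] (hB : B.IsAlt)
    (hBnd : B.Nondegenerate) (hS : PairwiseAnticommuting B S) (hsum : ∑ x ∈ S, x ≠ 0)
    (hcard : S.card < finrank (ZMod 2) M) (s : M) : ∃ Q ≠ s, ∀ P ∈ S, B P Q = 1 := by
  obtain ⟨f, hf⟩ : ∃ f : Dual (ZMod 2) M, ∀ P ∈ S, f P = 1 :=
    Module.exists_dual_forall_apply_eq_one (hS.linearIndepOn hB hsum)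
  obtain ⟨g, hg0, hg⟩ := Submodule.exists_le_ker_of_lt_top _
    (Submodule.lt_top_of_finrank_lt_finrank ((finrank_span_finset_le_card S).trans_lt hcard))
  let e := B.flip.toDual hBnd.flip
  have he : ∀ (h : Dual (ZMod 2) M) (P : M), B P (e.symm h) = h P :=
    LinearMap.BilinForm.apply_toDual_symm_apply (B := B.flip)
  by_cases hfs : e.symm f = s
  · refine ⟨e.symm (f + g), fun h => hg0 ?_, fun P hP => ?_⟩
    · simpa using e.symm.injective (h.trans hfs.symm)
    · rw [he, LinearMap.add_apply, hf P hP, LinearMap.mem_ker.mp (hg (Submodule.subset_span hP)),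
        add_zero]
  · exact ⟨e.symm f, hfs, fun P hP => (he f P).trans (hf P hP)⟩

lemma exists_insert [FiniteDimensional (ZMod 2) M] [DecidableEq M] (hB : B.IsAlt)
    (hBnd : B.Nondegenerate) (hS : PairwiseAnticommuting B S) (hsum : ∑ x ∈ S, x ≠ 0)
    (hcard : S.card < finrank (ZMod 2) M) :
    ∃ Q ∉ S, PairwiseAnticommuting B (insert Q S) ∧ ∑ x ∈ insert Q S, x ≠ 0 := by
  obtain ⟨Q, hQs, hQ⟩ := hS.exists_forall_apply_eq_one_ne hB hBnd hsum hcard (∑ x ∈ S, x)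
  have hQS := notMem_of_forall_apply_eq_one hB hQ
  refine ⟨Q, hQS, hS.insert_of_forall hB hQ, fun h => hQs ?_⟩
  rw [sum_insert hQS] at h
  rw [eq_neg_of_add_eq_zero_left h, ZModModule.neg_eq_self]

lemma exists_superset_card_eq_finrank [FiniteDimensional (ZMod 2) M] (hB : B.IsAlt)
    (hBnd : B.Nondegenerate) (hS : PairwiseAnticommuting B S) (hsum : ∑ x ∈ S, x ≠ 0) :
    ∃ T, S ⊆ T ∧ PairwiseAnticommuting B T ∧ ∑ x ∈ T, x ≠ 0 ∧ T.card = finrank (ZMod 2) M := by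
  classical
  obtain ⟨d, hd⟩ := Nat.exists_eq_add_of_le (hS.card_le_finrank hB hsum)
  induction d generalizing S with
  | zero => exact ⟨S, subset_rfl, hS, hsum, hd.symm⟩
  | succ d ih =>
    obtain ⟨Q, hQS, hQ, hQsum⟩ := hS.exists_insert hB hBnd hsum (by omega)
    obtain ⟨T, hST, hT⟩ := ih hQ hQsum (by rw [card_insert_of_notMem hQS]; omega)
    exact ⟨T, (subset_insert Q S).trans hST, hT⟩

lemma forall_apply_sum_eq_one (hB : B.IsAlt) (hS : PairwiseAnticommuting B S)
    (heven : Even S.card) : ∀ P ∈ S, B P (∑ x ∈ S, x) = 1 := by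
  classical
  intro P hP
  rw [hS.apply_sum_of_subset hB subset_rfl hP, if_pos hP, ZMod.natCast_eq_zero_iff_even.mpr heven,
    zero_add]

theorem exists_superset_card_eq_finrank_add_one [FiniteDimensional (ZMod 2) M] (hB : B.IsAlt)
    (hBnd : B.Nondegenerate) (hS : PairwiseAnticommuting B S) (hsum : ∑ x ∈ S, x ≠ 0)
    (heven : Even (finrank (ZMod 2) M)) :
    ∃ T, S ⊆ T ∧ PairwiseAnticommuting B T ∧ T.card = finrank (ZMod 2) M + 1 := by
  classical
  obtain ⟨T, hST, hT, -, hcard⟩ := hS.exists_superset_card_eq_finrank hB hBnd hsum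
  have hsumT := hT.forall_apply_sum_eq_one hB (hcard ▸ heven)
  refine ⟨insert (∑ x ∈ T, x) T, hST.trans (subset_insert _ T), hT.insert_of_forall hB hsumT, ?_⟩
  rw [card_insert_of_notMem (notMem_of_forall_apply_eq_one hB hsumT), hcard]

end PairwiseAnticommuting

end

noncomputable def symplB (n : ℕ) : LinearMap.BilinForm (ZMod 2) (V n) :=
  LinearMap.mk₂ (ZMod 2) sympl
    (fun _ _ _ => by simp only [sympl, ← sum_add_distrib]; congr! 1; simp; ring)
    (fun _ _ _ => by simp only [sympl, smul_eq_mul, mul_sum]; congr! 1; simp; ring)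
    (fun _ _ _ => by simp only [sympl, ← sum_add_distrib]; congr! 1; simp; ring)
    (fun _ _ _ => by simp only [sympl, smul_eq_mul, mul_sum]; congr! 1; simp; ring)

@[simp] lemma symplB_apply {n : ℕ} (P Q : V n) : symplB n P Q = sympl P Q := rfl

lemma symplB_isAlt (n : ℕ) : (symplB n).IsAlt := fun P =>
  (symplB_apply P P).trans <| sum_eq_zero fun i _ => by
    rw [mul_comm (P.2 i)]
    exact CharTwo.add_self_eq_zero _

lemma symplB_nondegenerate (n : ℕ) : (symplB n).Nondegenerate := by
  refine (LinearMap.IsRefl.nondegenerate_iff_separatingLeft (symplB_isAlt n).isRefl).mpr ?_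
  intro P hP
  ext i
  · simpa [sympl, Pi.single_apply] using hP (0, Pi.single i 1)
  · simpa [sympl, Pi.single_apply] using hP (Pi.single i 1, 0)

lemma finrank_V (n : ℕ) : finrank (ZMod 2) (V n) = 2 * n := by
  rw [finrank_prod, finrank_fin_fun, two_mul]

theorem stmt_15 {n : ℕ} (S : Finset (V n)) (hS : AC S)
    (hsum : ∑ x ∈ S, x ≠ (0 : V n)) :
    ∃ T : Finset (V n), S ⊆ T ∧ AC T ∧ T.card = 2 * n + 1 := by
  obtain ⟨T, hST, hT, hcard⟩ := PairwiseAnticommuting.exists_superset_card_eq_finrank_add_one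
    (B := symplB n) (symplB_isAlt n) (symplB_nondegenerate n) hS hsum
    (finrank_V n ▸ even_two_mul n)
  exact ⟨T, hST, hT, finrank_V n ▸ hcard⟩
end

section
/- Let S be a finite set with |S| = m even, and v : S → 𝔽₂ any function. Define F_v : 𝒫(S) × S → 𝔽₂ by F_v(T,x) = v(x) + |T| + 1 (mod 2) if x ∈ T, and v(x) + |T| (mod 2) if x ∉ T. Then for every function q : S → 𝔽₂ there exists a unique subset U ⊆ S with F_v(U,·) = q. -/
/-!
A solution `U` is pinned down by the parity `c` of its size: `x ∈ U` exactly when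
`q x = v x + c + 1`. The two candidate sets obtained for `c = 0` and `c = 1` split `S`, so when
`|S|` is even they have the same parity `p`; hence only `c = p` is self-consistent, and the
candidate for `c = p` is the unique solution.
-/

/-- `F_v(T,x) = v(x) + |T| + 1` if `x ∈ T`, and `v(x) + |T|` otherwise (mod 2). -/
def Fv {α : Type*} [DecidableEq α] (v : α → ZMod 2) (T : Finset α) (x : α) : ZMod 2 :=
  if x ∈ T then v x + T.card + 1 else v x + T.card

lemma ZMod.two_ne_add_one_iff (a b : ZMod 2) : a ≠ b + 1 ↔ a = b := by
  revert a b; decide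

namespace Fv

variable {α : Type*} (v q : α → ZMod 2) (S : Finset α)

lemma eq_iff [DecidableEq α] (U : Finset α) (x : α) :
    Fv v U x = q x ↔ (x ∈ U ↔ q x = v x + U.card + 1) := by
  unfold Fv
  split_ifs with hx
  · simp only [hx, true_iff]
    exact eq_comm
  · simp only [hx, false_iff, ZMod.two_ne_add_one_iff]
    exact eq_comm

/-- The only possible solution whose size has parity `c`. -/
def candidate (c : ZMod 2) : Finset α :=
  S.filter fun x => q x = v x + c + 1

lemma solves_iff [DecidableEq α] (U : Finset α) :
    (U ⊆ S ∧ ∀ x ∈ S, Fv v U x = q x) ↔ U = candidate v q S U.card := by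
  simp only [eq_iff]
  constructor
  · rintro ⟨hUS, hU⟩
    ext x
    by_cases hx : x ∈ S
    · simp [candidate, hx, hU x hx]
    · simp [candidate, hx, show x ∉ U from fun h => hx (hUS h)]
  · intro hU
    refine ⟨hU ▸ Finset.filter_subset _ _, fun x hx => ?_⟩
    conv_lhs => rw [hU]
    simp [candidate, hx]

lemma card_candidate_add_card_candidate_add_one (c : ZMod 2) :
    (candidate v q S c).card + (candidate v q S (c + 1)).card = S.card := by
  have hcompl : candidate v q S (c + 1) = S.filter fun x => ¬ q x = v x + c + 1 := by
    refine Finset.filter_congr fun x _ => ?_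
    rw [← ne_eq, ZMod.two_ne_add_one_iff, ← add_assoc, CharTwo.add_cancel_right]
  rw [hcompl]
  exact Finset.card_filter_add_card_filter_not _

lemma cast_card_candidate (hS : Even S.card) (c : ZMod 2) :
    ((candidate v q S c).card : ZMod 2) = (candidate v q S 0).card := by
  have hsplit := congrArg (Nat.cast : ℕ → ZMod 2) (card_candidate_add_card_candidate_add_one v q S 0)
  rw [Nat.cast_add, (ZMod.natCast_eq_zero_iff_even).2 hS, CharTwo.add_eq_zero, zero_add]
    at hsplit
  obtain rfl | rfl : c = 0 ∨ c = 1 := by revert c; decide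
  · rfl
  · exact hsplit.symm

end Fv

open Fv in
theorem stmt_16 {α : Type*} [DecidableEq α] (S : Finset α) (hS : Even S.card)
    (v q : α → ZMod 2) :
    ∃! U : Finset α, U ⊆ S ∧ ∀ x ∈ S, Fv v U x = q x := by
  set p : ZMod 2 := ((candidate v q S 0).card : ZMod 2)
  refine ⟨candidate v q S p, (solves_iff v q S _).2 ?_, fun U hU => ?_⟩
  · rw [cast_card_candidate v q S hS]
  · replace hU := (solves_iff v q S U).1 hU
    have hcard : (U.card : ZMod 2) = p := by
      rw [hU, cast_card_candidate v q S hS]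
    rwa [hcard] at hU
end

section
/- Let S be a finite set with |S| = m odd, and v, q : S → 𝔽₂ functions. Define F_v(T,x) = v(x) + |T| + 1 (mod 2) if x ∈ T, and v(x) + |T| (mod 2) otherwise. If Σ_{x∈S} q(x) ≡ Σ_{x∈S} v(x) (mod 2), then there exist exactly two subsets of S, namely some V and its complement S \ V, with F_v(V,·) = F_v(S\V,·) = q; if the parities differ, no subset T satisfies F_v(T,·) = q. -/
open Finset

theorem Finset.Nonempty.ne_sdiff_self {α : Type*} [DecidableEq α] {S : Finset α}
    (hS : S.Nonempty) (W : Finset α) : W ≠ S \ W := by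
  intro h
  have hW : Disjoint W W := by
    have := disjoint_sdiff (s := W) (t := S)
    rwa [← h] at this
  exact hS.ne_empty (by simpa [disjoint_self.mp hW] using h.symm)

theorem natCast_card_filter_eq_one {α : Type*} (S : Finset α) (f : α → ZMod 2) :
    (#(S.filter (f · = 1)) : ZMod 2) = ∑ x ∈ S, f x := by
  rw [card_filter, Nat.cast_sum]
  refine sum_congr rfl fun x _ => ?_
  generalize f x = a
  revert a
  decide

theorem filter_add_one_eq_one {α : Type*} [DecidableEq α] (S : Finset α) (f : α → ZMod 2) :
    S.filter (f · + 1 = 1) = S \ S.filter (f · = 1) := by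
  rw [← filter_not]
  refine filter_congr fun x _ => ?_
  generalize f x = a
  revert a
  decide

section

variable {α : Type*} [DecidableEq α] {S T : Finset α} {v q : α → ZMod 2}

theorem Fv_eq_add_ite (x : α) : Fv v T x = v x + #T + if x ∈ T then 1 else 0 := by
  unfold Fv
  split_ifs <;> simp

theorem Fv_eq_iff {x : α} : Fv v T x = q x ↔ (x ∈ T ↔ v x + q x + #T = 1) := by
  rw [Fv_eq_add_ite]
  generalize v x = a, q x = b, (#T : ZMod 2) = c
  by_cases hx : x ∈ T <;>
    simp only [hx, if_true, if_false, true_iff, false_iff] <;> revert a b c <;> decide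

theorem sum_Fv (hT : T ⊆ S) (v : α → ZMod 2) :
    ∑ x ∈ S, Fv v T x = ∑ x ∈ S, v x + (#S + 1) * #T := by
  simp only [Fv_eq_add_ite, sum_add_distrib, sum_const, sum_boole, filter_mem_eq_inter,
    inter_eq_right.mpr hT, nsmul_eq_mul]
  ring

theorem Fv_eq_on_iff_eq_filter (hT : T ⊆ S) :
    (∀ x ∈ S, Fv v T x = q x) ↔ T = S.filter (fun x => v x + q x + #T = 1) := by
  refine ⟨fun h => ext fun x => ?_, fun h x hx => Fv_eq_iff.mpr ?_⟩
  · by_cases hx : x ∈ S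
    · simpa [hx] using Fv_eq_iff.mp (h x hx)
    · simpa [hx] using fun hxT => hx (hT hxT)
  · conv_lhs => rw [h]
    simp [hx]

theorem eq_or_eq_sdiff_of_Fv_eq_on (hT : T ⊆ S) (h : ∀ x ∈ S, Fv v T x = q x) :
    T = S.filter (fun x => v x + q x = 1) ∨ T = S \ S.filter (fun x => v x + q x = 1) := by
  rw [Fv_eq_on_iff_eq_filter hT] at h
  obtain hc | hc : (#T : ZMod 2) = 0 ∨ (#T : ZMod 2) = 1 := by
    generalize (#T : ZMod 2) = c
    revert c
    decide
  · left
    simpa only [hc, add_zero] using h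
  · right
    rwa [hc, filter_add_one_eq_one S fun x => v x + q x] at h

theorem sum_eq_sum_of_Fv_eq_on (hS : Odd #S) (hT : T ⊆ S) (h : ∀ x ∈ S, Fv v T x = q x) :
    ∑ x ∈ S, q x = ∑ x ∈ S, v x := by
  have hS1 : (#S + 1 : ZMod 2) = 0 := by
    rw [hS.natCast_zmod_two]
    decide
  calc ∑ x ∈ S, q x = ∑ x ∈ S, Fv v T x := (sum_congr rfl h).symm
    _ = ∑ x ∈ S, v x := by rw [sum_Fv hT, hS1, zero_mul, add_zero]

theorem Fv_eq_on_of_sum_eq_sum (hS : Odd #S) (h : ∑ x ∈ S, q x = ∑ x ∈ S, v x) :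
    (∀ x ∈ S, Fv v (S.filter (fun x => v x + q x = 1)) x = q x) ∧
      ∀ x ∈ S, Fv v (S \ S.filter (fun x => v x + q x = 1)) x = q x := by
  set W := S.filter (fun x => v x + q x = 1)
  have hW : (#W : ZMod 2) = 0 := by
    rw [natCast_card_filter_eq_one S fun x => v x + q x, sum_add_distrib, h,
      CharTwo.add_self_eq_zero]
  have hSW : (#(S \ W) : ZMod 2) = 1 := by
    rw [card_sdiff_of_subset (filter_subset _ S), Nat.cast_sub (card_le_card (filter_subset _ S)),
      hW, hS.natCast_zmod_two, sub_zero]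
  constructor
  · rw [Fv_eq_on_iff_eq_filter (filter_subset _ S), hW]
    simp only [add_zero]
  · rw [Fv_eq_on_iff_eq_filter sdiff_subset, hSW, filter_add_one_eq_one S fun x => v x + q x]

end

theorem stmt_17 {α : Type*} [DecidableEq α] (S : Finset α) (hS : Odd S.card)
    (v q : α → ZMod 2) :
    ((∑ x ∈ S, q x) = (∑ x ∈ S, v x) →
      ∃ W ⊆ S, W ≠ S \ W ∧
        (∀ x ∈ S, Fv v W x = q x) ∧ (∀ x ∈ S, Fv v (S \ W) x = q x) ∧
        (∀ T ⊆ S, (∀ x ∈ S, Fv v T x = q x) → T = W ∨ T = S \ W)) ∧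
    ((∑ x ∈ S, q x) ≠ (∑ x ∈ S, v x) →
      ∀ T ⊆ S, ¬ (∀ x ∈ S, Fv v T x = q x)) := by
  refine ⟨fun h => ?_, fun hne T hT h => hne (sum_eq_sum_of_Fv_eq_on hS hT h)⟩
  have hSne : S.Nonempty := card_pos.mp hS.pos
  obtain ⟨hW, hSW⟩ := Fv_eq_on_of_sum_eq_sum hS h
  exact ⟨_, filter_subset _ S, hSne.ne_sdiff_self _, hW, hSW,
    fun T hT hTsol => eq_or_eq_sdiff_of_Fv_eq_on hT hTsol⟩
end
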